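/- Let Λ and Λ̂₊ be positive semidefinite d×d matrices each of rank at most r. Then |Tr[sqrt(Λ)] - Tr[sqrt(Λ̂₊)]| ≤ r · ‖sqrt(Λ) - sqrt(Λ̂₊)‖₂ ≤ r · sqrt(‖Λ - Λ̂₊‖₁). -/

import Mathlib

open Matrix ComplexOrder

attribute [local instance] Classical.propDecidable

/-- Square root of a positive semidefinite matrix (junk value `0` otherwise). -/
noncomputable def psqrt {d : ℕ} (X : Matrix (Fin d) (Fin d) ℂ) : Matrix (Fin d) (Fin d) ℂ :=
  if h : X.PosSemidef then
    h.1.eigenvectorUnitary.1 * diagonal ((↑) ∘ (√·) ∘ h.1.eigenvalues) *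
      (star h.1.eigenvectorUnitary : Matrix (Fin d) (Fin d) ℂ)
  else 0

/-- Schatten 1-norm (trace norm): `‖M‖₁ = Tr √(Mᴴ M)`. -/
noncomputable def traceNorm {d : ℕ} (M : Matrix (Fin d) (Fin d) ℂ) : ℝ :=
  (psqrt (Mᴴ * M)).trace.re

/-- Fidelity `F(X, σ) = Tr √(√σ X √σ)` of positive semidefinite matrices. -/
noncomputable def fid {d : ℕ} (X σ : Matrix (Fin d) (Fin d) ℂ) : ℝ :=
  (psqrt (psqrt σ * X * psqrt σ)).trace.re

/-- Frobenius (Schatten 2) norm: `‖M‖₂ = √(Tr (Mᴴ M))`. -/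
noncomputable def frobNorm {d : ℕ} (M : Matrix (Fin d) (Fin d) ℂ) : ℝ :=
  Real.sqrt ((Mᴴ * M).trace.re)


/-!
Let `A = √Λ` and `B = √L`. In an orthonormal eigenbasis `vᵢ` of `A` with eigenvalues `aᵢ`,
`Tr A - Tr B = ∑ᵢ (aᵢ - ⟨vᵢ, B vᵢ⟩)`. The terms with `aᵢ = 0` are nonpositive, and the at most
`rank A = rank Λ ≤ r` others are diagonal entries of `A - B`, so Cauchy–Schwarz bounds their sum
by `√r ‖A - B‖₂ ≤ r ‖A - B‖₂`.

Powers–Størmer: if `v` is a unit eigenvector of `C = A - B` with eigenvalue `c`, then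
`A² - B² = BC + CB + C²` gives `⟨v, (Λ - L) v⟩ = c (⟨v, A v⟩ + ⟨v, B v⟩)`, and since
`c = ⟨v, A v⟩ - ⟨v, B v⟩` with both terms nonnegative, `c² ≤ |⟨v, (Λ - L) v⟩| ≤ ⟨v, |Λ - L| v⟩`.
Summing over an eigenbasis of `C` gives `‖C‖₂² ≤ Tr |Λ - L| = ‖Λ - L‖₁`.
-/

open scoped MatrixOrder InnerProductSpace

namespace Matrix

variable {n 𝕜 : Type*} [Fintype n] [RCLike 𝕜]

lemma _root_.OrthonormalBasis.star_dotProduct_self (b : OrthonormalBasis n 𝕜 (EuclideanSpace 𝕜 n))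
    (i : n) : star ⇑(b i) ⬝ᵥ ⇑(b i) = 1 := by
  rw [dotProduct_comm, ← EuclideanSpace.inner_eq_star_dotProduct, inner_self_eq_norm_sq_to_K,
    b.orthonormal.1 i]
  simp

lemma star_dotProduct_mul_mulVec_of_mulVec_eq_smul {C : Matrix n n 𝕜} {v : n → 𝕜} {c : ℝ}
    (hv : C *ᵥ v = c • v) (K : Matrix n n 𝕜) :
    star v ⬝ᵥ ((K * C) *ᵥ v) = c * (star v ⬝ᵥ (K *ᵥ v)) := by
  rw [← mulVec_mulVec, hv, mulVec_smul, dotProduct_smul, RCLike.real_smul_eq_coe_mul]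

lemma IsHermitian.star_dotProduct_mul_mulVec_of_mulVec_eq_smul {C : Matrix n n 𝕜} {v : n → 𝕜}
    {c : ℝ} (hC : C.IsHermitian) (hv : C *ᵥ v = c • v) (K : Matrix n n 𝕜) :
    star v ⬝ᵥ ((C * K) *ᵥ v) = c * (star v ⬝ᵥ (K *ᵥ v)) := by
  rw [← mulVec_mulVec, dotProduct_mulVec, ← hC.eq, ← star_mulVec, hv, star_smul, star_trivial,
    RCLike.real_smul_eq_coe_smul (K := 𝕜), smul_dotProduct, smul_eq_mul]

lemma sq_le_abs_re_star_dotProduct_mul_self_sub_mul_self {A B : Matrix n n 𝕜} {v : n → 𝕜}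
    {c : ℝ} (hA : A.PosSemidef) (hB : B.PosSemidef) (hv : (A - B) *ᵥ v = c • v)
    (hv₁ : star v ⬝ᵥ v = 1) :
    c ^ 2 ≤ |RCLike.re (star v ⬝ᵥ ((A * A - B * B) *ᵥ v))| := by
  set C := A - B
  have hC : C.IsHermitian := hA.1.sub hB.1
  have hsplit : A * A - B * B = B * C + C * B + C * C := by simp only [C]; noncomm_ring
  have hc : star v ⬝ᵥ (C *ᵥ v) = c := by
    simpa [hv₁] using star_dotProduct_mul_mulVec_of_mulVec_eq_smul hv 1
  set a := RCLike.re (star v ⬝ᵥ (A *ᵥ v))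
  set b := RCLike.re (star v ⬝ᵥ (B *ᵥ v))
  have ha : 0 ≤ a := hA.re_dotProduct_nonneg v
  have hb : 0 ≤ b := hB.re_dotProduct_nonneg v
  have hab : c = a - b := by
    have := congrArg RCLike.re hc
    simp only [C, sub_mulVec, dotProduct_sub, map_sub, RCLike.ofReal_re] at this
    linarith
  have hq : RCLike.re (star v ⬝ᵥ ((A * A - B * B) *ᵥ v)) = c * (a + b) := by
    rw [hsplit, add_mulVec, add_mulVec, dotProduct_add, dotProduct_add,
      star_dotProduct_mul_mulVec_of_mulVec_eq_smul hv,
      hC.star_dotProduct_mul_mulVec_of_mulVec_eq_smul hv,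
      star_dotProduct_mul_mulVec_of_mulVec_eq_smul hv, hc]
    simp only [map_add, RCLike.re_ofReal_mul, RCLike.ofReal_re]
    rw [hab]; ring
  rw [hq, abs_mul, abs_of_nonneg (by linarith : 0 ≤ a + b), sq, ← abs_mul_abs_self, hab]
  exact mul_le_mul_of_nonneg_left (abs_sub_le_iff.2 ⟨by linarith, by linarith⟩) (abs_nonneg _)

lemma abs_re_star_dotProduct_mulVec_le_abs {M : Matrix n n 𝕜} (hM : M.IsHermitian) (v : n → 𝕜) :
    |RCLike.re (star v ⬝ᵥ (M *ᵥ v))| ≤ RCLike.re (star v ⬝ᵥ (CFC.abs M *ᵥ v)) := by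
  have hM' : IsSelfAdjoint M := hM
  have hsub : (CFC.abs M - M).PosSemidef := by
    rw [← nonneg_iff_posSemidef, CFC.abs_sub_self M]
    exact smul_nonneg zero_le_two (CFC.negPart_nonneg M)
  have hadd : (CFC.abs M + M).PosSemidef := by
    rw [← nonneg_iff_posSemidef, CFC.abs_add_self M]
    exact smul_nonneg zero_le_two (CFC.posPart_nonneg M)
  have h₁ := hsub.re_dotProduct_nonneg v
  have h₂ := hadd.re_dotProduct_nonneg v
  simp only [sub_mulVec, add_mulVec, dotProduct_sub, dotProduct_add, map_sub, map_add] at h₁ h₂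
  exact abs_le.2 ⟨by linarith, by linarith⟩

lemma norm_star_dotProduct_mulVec_sq_le (D : Matrix n n 𝕜) {v : n → 𝕜}
    (hv₁ : star v ⬝ᵥ v = 1) :
    ‖star v ⬝ᵥ (D *ᵥ v)‖ ^ 2 ≤ RCLike.re (star v ⬝ᵥ ((Dᴴ * D) *ᵥ v)) := by
  have hinner : star v ⬝ᵥ (D *ᵥ v) = ⟪WithLp.toLp 2 v, WithLp.toLp 2 (D *ᵥ v)⟫_𝕜 := by
    rw [EuclideanSpace.inner_toLp_toLp, dotProduct_comm]
  have hnorm : ‖WithLp.toLp 2 v‖ = 1 := by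
    rw [← pow_eq_one_iff_of_nonneg (norm_nonneg _) two_ne_zero, @norm_sq_eq_re_inner 𝕜,
      EuclideanSpace.inner_toLp_toLp, dotProduct_comm, hv₁, RCLike.one_re]
  have hnorm' : ‖WithLp.toLp 2 (D *ᵥ v)‖ ^ 2 = RCLike.re (star v ⬝ᵥ ((Dᴴ * D) *ᵥ v)) := by
    rw [@norm_sq_eq_re_inner 𝕜, EuclideanSpace.inner_toLp_toLp, dotProduct_comm, star_mulVec,
      ← dotProduct_mulVec, mulVec_mulVec]
  rw [hinner, ← hnorm']
  gcongr
  simpa [hnorm] using norm_inner_le_norm (𝕜 := 𝕜) (WithLp.toLp 2 v) (WithLp.toLp 2 (D *ᵥ v))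

variable [DecidableEq n]

lemma trace_eq_sum_star_dotProduct_mulVec (K : Matrix n n 𝕜)
    (b : OrthonormalBasis n 𝕜 (EuclideanSpace 𝕜 n)) :
    K.trace = ∑ i, star ⇑(b i) ⬝ᵥ (K *ᵥ ⇑(b i)) := by
  have htr : LinearMap.trace 𝕜 _ (toEuclideanLin K) = K.trace := by
    rw [toEuclideanLin_eq_toLin_orthonormal, LinearMap.trace_eq_matrix_trace 𝕜
      (EuclideanSpace.basisFun n 𝕜).toBasis, LinearMap.toMatrix_toLin]
  rw [← htr, LinearMap.trace_eq_sum_inner _ b]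
  refine Fintype.sum_congr _ _ fun i => ?_
  rw [EuclideanSpace.inner_eq_star_dotProduct, dotProduct_comm]
  rfl

lemma IsHermitian.re_trace_conjTranspose_mul_self_eq_sum_sq {C : Matrix n n 𝕜}
    (hC : C.IsHermitian) : RCLike.re (Cᴴ * C).trace = ∑ i, hC.eigenvalues i ^ 2 := by
  rw [hC.eq, trace_eq_sum_star_dotProduct_mulVec _ hC.eigenvectorBasis, map_sum]
  refine Fintype.sum_congr _ _ fun i => ?_
  have hv := hC.mulVec_eigenvectorBasis i
  rw [Matrix.star_dotProduct_mul_mulVec_of_mulVec_eq_smul hv, hv, dotProduct_smul,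
    hC.eigenvectorBasis.star_dotProduct_self]
  simp [sq]

theorem re_trace_sqrt_sub_sqrt_sq_le_re_trace_abs {X Y : Matrix n n 𝕜} (hX : X.PosSemidef)
    (hY : Y.PosSemidef) :
    RCLike.re ((CFC.sqrt X - CFC.sqrt Y)ᴴ * (CFC.sqrt X - CFC.sqrt Y)).trace ≤
      RCLike.re (CFC.abs (X - Y)).trace := by
  have hA : (CFC.sqrt X).PosSemidef := (CFC.sqrt_nonneg X).posSemidef
  have hB : (CFC.sqrt Y).PosSemidef := (CFC.sqrt_nonneg Y).posSemidef
  have hC : (CFC.sqrt X - CFC.sqrt Y).IsHermitian := hA.1.sub hB.1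
  have hXY : X - Y = CFC.sqrt X * CFC.sqrt X - CFC.sqrt Y * CFC.sqrt Y := by
    rw [CFC.sqrt_mul_sqrt_self X hX.nonneg, CFC.sqrt_mul_sqrt_self Y hY.nonneg]
  rw [hC.re_trace_conjTranspose_mul_self_eq_sum_sq,
    trace_eq_sum_star_dotProduct_mulVec _ hC.eigenvectorBasis, map_sum]
  refine Finset.sum_le_sum fun i _ => ?_
  refine (sq_le_abs_re_star_dotProduct_mul_self_sub_mul_self hA hB
    (hC.mulVec_eigenvectorBasis i) (hC.eigenvectorBasis.star_dotProduct_self i)).trans ?_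
  rw [← hXY]
  exact abs_re_star_dotProduct_mulVec_le_abs (hX.1.sub hY.1) _

lemma sum_re_star_dotProduct_mulVec_le (D : Matrix n n 𝕜)
    (b : OrthonormalBasis n 𝕜 (EuclideanSpace 𝕜 n)) (s : Finset n) :
    ∑ i ∈ s, RCLike.re (star ⇑(b i) ⬝ᵥ (D *ᵥ ⇑(b i))) ≤
      √(s.card) * √(RCLike.re (Dᴴ * D).trace) := by
  calc ∑ i ∈ s, RCLike.re (star ⇑(b i) ⬝ᵥ (D *ᵥ ⇑(b i)))
      ≤ ∑ i ∈ s, 1 * ‖star ⇑(b i) ⬝ᵥ (D *ᵥ ⇑(b i))‖ := by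
        gcongr with i; rw [one_mul]; exact RCLike.re_le_norm _
    _ ≤ √(∑ i ∈ s, 1 ^ 2) * √(∑ i ∈ s, ‖star ⇑(b i) ⬝ᵥ (D *ᵥ ⇑(b i))‖ ^ 2) :=
        Real.sum_mul_le_sqrt_mul_sqrt _ _ _
    _ ≤ √(s.card) * √(∑ i, RCLike.re (star ⇑(b i) ⬝ᵥ ((Dᴴ * D) *ᵥ ⇑(b i)))) := by
        simp only [one_pow, Finset.sum_const, nsmul_eq_mul, mul_one]
        gcongr
        calc _ ≤ ∑ i ∈ s, RCLike.re (star ⇑(b i) ⬝ᵥ ((Dᴴ * D) *ᵥ ⇑(b i))) :=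
              Finset.sum_le_sum fun i _ =>
                norm_star_dotProduct_mulVec_sq_le D (b.star_dotProduct_self i)
          _ ≤ _ := Finset.sum_le_sum_of_subset_of_nonneg (Finset.subset_univ s) fun i _ _ =>
              (posSemidef_conjTranspose_mul_self D).re_dotProduct_nonneg _
    _ = √(s.card) * √(RCLike.re (Dᴴ * D).trace) := by
        rw [trace_eq_sum_star_dotProduct_mulVec _ b, map_sum]

theorem PosSemidef.re_trace_sub_le_sqrt_rank_mul {A B : Matrix n n 𝕜} (hA : A.PosSemidef)
    (hB : B.PosSemidef) :
    RCLike.re A.trace - RCLike.re B.trace ≤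
      √(A.rank) * √(RCLike.re ((A - B)ᴴ * (A - B)).trace) := by
  set b := hA.1.eigenvectorBasis
  set s := Finset.univ.filter fun i => hA.1.eigenvalues i ≠ 0
  have hrank : A.rank = s.card := by
    rw [hA.1.rank_eq_card_non_zero_eigs, Fintype.card_subtype]
  calc RCLike.re A.trace - RCLike.re B.trace
      = ∑ i, (hA.1.eigenvalues i - RCLike.re (star ⇑(b i) ⬝ᵥ (B *ᵥ ⇑(b i)))) := by
        rw [trace_eq_sum_star_dotProduct_mulVec B b, hA.1.trace_eq_sum_eigenvalues, map_sum,
          map_sum, Finset.sum_sub_distrib]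
        simp
    _ ≤ ∑ i ∈ s, (hA.1.eigenvalues i - RCLike.re (star ⇑(b i) ⬝ᵥ (B *ᵥ ⇑(b i)))) := by
        rw [← Finset.sum_filter_add_sum_filter_not Finset.univ fun i => hA.1.eigenvalues i ≠ 0]
        refine add_le_of_nonpos_right (Finset.sum_nonpos fun i hi => ?_)
        rw [Finset.mem_filter, not_not] at hi
        linarith [hi.2, hB.re_dotProduct_nonneg (b i)]
    _ = ∑ i ∈ s, RCLike.re (star ⇑(b i) ⬝ᵥ ((A - B) *ᵥ ⇑(b i))) := by
        refine Finset.sum_congr rfl fun i _ => ?_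
        rw [sub_mulVec, dotProduct_sub, map_sub, hA.1.eigenvalues_eq]
    _ ≤ _ := by
        rw [hrank]; exact sum_re_star_dotProduct_mulVec_le _ b s

end Matrix

section

variable {d : ℕ}

lemma psqrt_eq_sqrt {X : Matrix (Fin d) (Fin d) ℂ} (hX : X.PosSemidef) :
    psqrt X = CFC.sqrt X := by
  rw [psqrt, dif_pos hX, CFC.sqrt_eq_real_sqrt X hX.nonneg, cfcₙ_eq_cfc, hX.1.cfc_eq,
    IsHermitian.cfc, Unitary.conjStarAlgAut_apply]
  rfl

lemma traceNorm_eq_re_trace_abs (M : Matrix (Fin d) (Fin d) ℂ) :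
    traceNorm M = (CFC.abs M).trace.re := by
  rw [traceNorm, psqrt_eq_sqrt (posSemidef_conjTranspose_mul_self M)]
  rfl

lemma rank_psqrt {X : Matrix (Fin d) (Fin d) ℂ} (hX : X.PosSemidef) :
    (psqrt X).rank = X.rank := by
  rw [psqrt_eq_sqrt hX, ← rank_conjTranspose_mul_self, (CFC.sqrt_nonneg X).posSemidef.1.eq,
    CFC.sqrt_mul_sqrt_self X hX.nonneg]

lemma frobNorm_sub_comm (A B : Matrix (Fin d) (Fin d) ℂ) :
    frobNorm (A - B) = frobNorm (B - A) := by
  rw [frobNorm, frobNorm, ← neg_sub B A, conjTranspose_neg, neg_mul_neg]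

lemma frobNorm_psqrt_sub_psqrt_le {X Y : Matrix (Fin d) (Fin d) ℂ} (hX : X.PosSemidef)
    (hY : Y.PosSemidef) : frobNorm (psqrt X - psqrt Y) ≤ √(traceNorm (X - Y)) := by
  rw [frobNorm, traceNorm_eq_re_trace_abs, psqrt_eq_sqrt hX, psqrt_eq_sqrt hY]
  exact Real.sqrt_le_sqrt (re_trace_sqrt_sub_sqrt_sq_le_re_trace_abs hX hY)

lemma re_trace_psqrt_sub_le {r : ℕ} {X Y : Matrix (Fin d) (Fin d) ℂ} (hX : X.PosSemidef)
    (hY : Y.PosSemidef) (hXr : X.rank ≤ r) :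
    (psqrt X).trace.re - (psqrt Y).trace.re ≤ √r * frobNorm (psqrt X - psqrt Y) := by
  have hA : (psqrt X).PosSemidef := psqrt_eq_sqrt hX ▸ (CFC.sqrt_nonneg X).posSemidef
  have hB : (psqrt Y).PosSemidef := psqrt_eq_sqrt hY ▸ (CFC.sqrt_nonneg Y).posSemidef
  refine (hA.re_trace_sub_le_sqrt_rank_mul hB).trans ?_
  rw [rank_psqrt hX, frobNorm]
  exact mul_le_mul_of_nonneg_right (Real.sqrt_le_sqrt (by exact_mod_cast hXr))
    (Real.sqrt_nonneg _)

end

theorem trace_sqrt_diff_bound {d r : ℕ} (Λ L : Matrix (Fin d) (Fin d) ℂ)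
    (hΛ : Λ.PosSemidef) (hL : L.PosSemidef)
    (hΛr : Λ.rank ≤ r) (hLr : L.rank ≤ r) :
    |(psqrt Λ).trace.re - (psqrt L).trace.re| ≤ r * frobNorm (psqrt Λ - psqrt L) ∧
    (r : ℝ) * frobNorm (psqrt Λ - psqrt L) ≤ r * Real.sqrt (traceNorm (Λ - L)) := by
  have hsqrt_le : √(r : ℝ) ≤ r :=
    (Real.sqrt_le_left r.cast_nonneg).2 (by exact_mod_cast Nat.le_self_pow two_ne_zero r)
  refine ⟨abs_sub_le_iff.2 ⟨?_, ?_⟩, ?_⟩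
  · exact (re_trace_psqrt_sub_le hΛ hL hΛr).trans (by gcongr; exact Real.sqrt_nonneg _)
  · rw [frobNorm_sub_comm]
    exact (re_trace_psqrt_sub_le hL hΛ hLr).trans (by gcongr; exact Real.sqrt_nonneg _)
  · exact mul_le_mul_of_nonneg_left (frobNorm_psqrt_sub_psqrt_le hΛ hL) r.cast_nonneg
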